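/- arXiv:2011.12785 — 5 statements merged into one kernel-verified Lean document; each statement's English description precedes it below -/
import Mathlib

section
/- For any real matrix F, the matrix θ = diag((I + FF^T)^{-1/2}, (I + F^T F)^{-1/2}) · [[I, -F], [F^T, I]] is orthogonal, i.e., θ^T θ = I. -/
open Matrix

/-- For any real matrix `F`, the matrix
`θ = diag((I + FFᵀ)^{-1/2}, (I + FᵀF)^{-1/2}) * [[I, -F], [Fᵀ, I]]` is orthogonal. -/
theorem stmt_2 {n m : ℕ} (F : Matrix (Fin n) (Fin m) ℝ)
    (Sih : Matrix (Fin n) (Fin n) ℝ) (Tih : Matrix (Fin m) (Fin m) ℝ)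
    (hSih : Sih.PosDef) (hTih : Tih.PosDef)
    (hS : Sih * Sih = (1 + F * Fᵀ)⁻¹) (hT : Tih * Tih = (1 + Fᵀ * F)⁻¹) :
    ((Matrix.fromBlocks Sih 0 0 Tih) * (Matrix.fromBlocks 1 (-F) Fᵀ 1))ᵀ *
      ((Matrix.fromBlocks Sih 0 0 Tih) * (Matrix.fromBlocks 1 (-F) Fᵀ 1)) = 1 := by
  have hSpd : (1 + F * Fᵀ).PosDef := by
    have h1 : (F * Fᵀ).PosSemidef := by
      simpa using Matrix.posSemidef_self_mul_conjTranspose F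
    simpa [add_comm] using Matrix.PosDef.add_posSemidef Matrix.PosDef.one h1
  have hTpd : (1 + Fᵀ * F).PosDef := by
    have h1 : (Fᵀ * F).PosSemidef := by
      simpa using Matrix.posSemidef_conjTranspose_mul_self F
    simpa [add_comm] using Matrix.PosDef.add_posSemidef Matrix.PosDef.one h1
  have hSu : IsUnit (1 + F * Fᵀ).det := (Matrix.isUnit_iff_isUnit_det _).1 hSpd.isUnit
  have hTu : IsUnit (1 + Fᵀ * F).det := (Matrix.isUnit_iff_isUnit_det _).1 hTpd.isUnit
  have hcomm : F * (1 + Fᵀ * F) = (1 + F * Fᵀ) * F := by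
    rw [Matrix.mul_add, Matrix.add_mul, Matrix.mul_one, Matrix.one_mul, Matrix.mul_assoc]
  have hFT : F * (1 + Fᵀ * F)⁻¹ = (1 + F * Fᵀ)⁻¹ * F := by
    calc F * (1 + Fᵀ * F)⁻¹
        = (1 + F * Fᵀ)⁻¹ * ((1 + F * Fᵀ) * F) * (1 + Fᵀ * F)⁻¹ := by
          rw [← Matrix.mul_assoc, Matrix.nonsing_inv_mul _ hSu, Matrix.one_mul]
      _ = (1 + F * Fᵀ)⁻¹ * (F * (1 + Fᵀ * F)) * (1 + Fᵀ * F)⁻¹ := by rw [hcomm]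
      _ = (1 + F * Fᵀ)⁻¹ * F := by
          rw [Matrix.mul_assoc, Matrix.mul_assoc, Matrix.mul_nonsing_inv _ hTu,
            Matrix.mul_one]
  have hFTt : Fᵀ * (1 + F * Fᵀ)⁻¹ = (1 + Fᵀ * F)⁻¹ * Fᵀ := by
    have := congrArg Matrix.transpose hFT
    simpa [Matrix.transpose_mul, Matrix.transpose_nonsing_inv, Matrix.transpose_add]
      using this.symm
  have hSihT : Sihᵀ = Sih := hSih.isHermitian
  have hTihT : Tihᵀ = Tih := hTih.isHermitian
  rw [Matrix.transpose_mul, Matrix.fromBlocks_transpose, Matrix.fromBlocks_transpose]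
  simp only [Matrix.transpose_one, Matrix.transpose_zero, Matrix.transpose_neg, hSihT, hTihT,
    Matrix.transpose_transpose]
  rw [Matrix.mul_assoc, ← Matrix.mul_assoc (Matrix.fromBlocks Sih 0 0 Tih)]
  rw [Matrix.fromBlocks_multiply]
  simp only [Matrix.mul_zero, Matrix.zero_mul, add_zero, zero_add, hS, hT]
  rw [Matrix.fromBlocks_multiply, Matrix.fromBlocks_multiply]
  simp only [Matrix.zero_mul, Matrix.mul_zero, add_zero, zero_add, neg_zero, Matrix.one_mul,
    Matrix.mul_one, Matrix.neg_mul, Matrix.mul_neg]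
  have b11 : (1 + F * Fᵀ)⁻¹ + F * ((1 + Fᵀ * F)⁻¹ * Fᵀ) = 1 := by
    rw [← hFTt, ← Matrix.mul_assoc]
    nth_rewrite 1 [← Matrix.one_mul (1 + F * Fᵀ)⁻¹]
    rw [← Matrix.add_mul, Matrix.mul_nonsing_inv _ hSu]
  have b12 : -((1 + F * Fᵀ)⁻¹ * F) + F * (1 + Fᵀ * F)⁻¹ = 0 := by
    rw [hFT, neg_add_cancel]
  have b21 : -(Fᵀ * (1 + F * Fᵀ)⁻¹) + (1 + Fᵀ * F)⁻¹ * Fᵀ = 0 := by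
    rw [hFTt, neg_add_cancel]
  have b22 : - -(Fᵀ * ((1 + F * Fᵀ)⁻¹ * F)) + (1 + Fᵀ * F)⁻¹ = 1 := by
    rw [neg_neg, ← Matrix.mul_assoc, hFTt, Matrix.mul_assoc]
    nth_rewrite 2 [← Matrix.mul_one (1 + Fᵀ * F)⁻¹]
    rw [← Matrix.mul_add, add_comm (Fᵀ * F), Matrix.nonsing_inv_mul _ hTu]
  rw [b11, b12, b21, b22, Matrix.fromBlocks_one]
end

section
/- For any real matrix L, the matrix ψ = [[I, L^T], [-L, I]] · diag((I + L^T L)^{-1/2}, (I + LL^T)^{-1/2}) is orthogonal, i.e., ψ^T ψ = I. -/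
/-! With `A = [[I, Lᵀ], [-L, I]]` one has `AᵀA = diag(I + LᵀL, I + LLᵀ)`, so `ψᵀψ` is block diagonal
with blocks `V^{-1/2} V V^{-1/2}` and `U^{-1/2} U U^{-1/2}`; each is `I` because a square root of
`M⁻¹` commutes with `M`. -/

open Matrix

namespace Matrix

variable {m n R : Type*} [Fintype m] [Fintype n]

theorem fromBlocks_one_transpose_neg_one_transpose_mul_self [DecidableEq m] [DecidableEq n]
    [CommRing R] (L : Matrix m n R) :
    (fromBlocks 1 Lᵀ (-L) 1)ᵀ * fromBlocks 1 Lᵀ (-L) 1 =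
      fromBlocks (1 + Lᵀ * L) 0 0 (1 + L * Lᵀ) := by
  simp [fromBlocks_transpose, fromBlocks_multiply, add_comm]

theorem transpose_mul_mul_fromBlocks_diag [CommSemiring R] (S M : Matrix n n R)
    (T N : Matrix m m R) :
    (fromBlocks S 0 0 T)ᵀ * fromBlocks M 0 0 N * fromBlocks S 0 0 T =
      fromBlocks (Sᵀ * M * S) 0 0 (Tᵀ * N * T) := by
  simp [fromBlocks_transpose, fromBlocks_multiply]

theorem mul_mul_eq_one_of_mul_self_eq_inv [DecidableEq n] [CommRing R]
    {S M : Matrix n n R} (hM : IsUnit M) (h : S * S = M⁻¹) : S * M * S = 1 := by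
  obtain ⟨u, rfl⟩ := hM
  have hcomm : Commute S u := Commute.units_inv_right_iff.mp <| by
    rw [coe_units_inv, ← h]
    exact (Commute.refl S).mul_right (Commute.refl S)
  rw [hcomm.eq, Matrix.mul_assoc, h, Matrix.mul_nonsing_inv _ (u.isUnit.map detMonoidHom)]

theorem isUnit_one_add_conjTranspose_mul_self [DecidableEq n] [Field R] [PartialOrder R]
    [StarRing R] [StarOrderedRing R] (L : Matrix m n R) : IsUnit (1 + Lᴴ * L) :=
  (PosDef.one.add_posSemidef (posSemidef_conjTranspose_mul_self L)).isUnit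

end Matrix

/-- For any real matrix `L`, the matrix
`ψ = [[I, Lᵀ], [-L, I]] * diag((I + LᵀL)^{-1/2}, (I + LLᵀ)^{-1/2})` is orthogonal. -/
theorem stmt_3 {p n : ℕ} (L : Matrix (Fin p) (Fin n) ℝ)
    (Vih : Matrix (Fin n) (Fin n) ℝ) (Uih : Matrix (Fin p) (Fin p) ℝ)
    (hVih : Vih.PosDef) (hUih : Uih.PosDef)
    (hV : Vih * Vih = (1 + Lᵀ * L)⁻¹) (hU : Uih * Uih = (1 + L * Lᵀ)⁻¹) :
    ((Matrix.fromBlocks 1 Lᵀ (-L) 1) * (Matrix.fromBlocks Vih 0 0 Uih))ᵀ *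
      ((Matrix.fromBlocks 1 Lᵀ (-L) 1) * (Matrix.fromBlocks Vih 0 0 Uih)) = 1 := by
  have hVunit : IsUnit (1 + Lᵀ * L) := by simpa using isUnit_one_add_conjTranspose_mul_self L
  have hUunit : IsUnit (1 + L * Lᵀ) := by simpa using isUnit_one_add_conjTranspose_mul_self Lᵀ
  have hVsymm : Vihᵀ = Vih := by simpa using hVih.isHermitian.eq
  have hUsymm : Uihᵀ = Uih := by simpa using hUih.isHermitian.eq
  calc _ = (fromBlocks Vih 0 0 Uih)ᵀ * ((fromBlocks 1 Lᵀ (-L) 1)ᵀ * fromBlocks 1 Lᵀ (-L) 1) *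
        fromBlocks Vih 0 0 Uih := by simp only [transpose_mul, Matrix.mul_assoc]
    _ = fromBlocks (Vih * (1 + Lᵀ * L) * Vih) 0 0 (Uih * (1 + L * Lᵀ) * Uih) := by
      rw [fromBlocks_one_transpose_neg_one_transpose_mul_self, transpose_mul_mul_fromBlocks_diag,
        hVsymm, hUsymm]
    _ = 1 := by
      rw [mul_mul_eq_one_of_mul_self_eq_inv hVunit hV, mul_mul_eq_one_of_mul_self_eq_inv hUunit hU,
        fromBlocks_one]
end

section
/- There is no noncausal linear controller that strictly dominates all others: for any two distinct matrices Q, Q' (Youla parameters of two controllers), the difference of quadratic cost operators T_{K'}^T T_{K'} - T_K^T T_K, after conjugation by the orthogonal matrices θ and ψ, has zero (1,1) block, and hence cannot be positive definite. -/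
/-!
Since `T_Q = [F; 1] Q [L, 1] + [G, 0; 0, 0]` and `[L, 1] [1; -L] = 0`, we get
`T_Q [1; -L] = [G; 0]` for every `Q`. The first block column of `ψ` is `[1; -L] V^{-1/2}`, so
the first block column of `θ T_Q ψ`, and hence the (1,1) block of its Gram matrix, does not depend
on `Q`; the resulting zero diagonal entry of the difference rules out positive definiteness.
Likewise `x = [v; -L v]` gives `xᵀ (T_{Q'}ᵀ T_{Q'} - T_Qᵀ T_Q) x = |G v|² - |G v|² = 0`.
-/

open Matrix

namespace Matrix

variable {R k l m n p q r : Type*}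

lemma toCols₁_fromBlocks (A : Matrix m n R) (B : Matrix m p R) (C : Matrix l n R)
    (D : Matrix l p R) : toCols₁ (fromBlocks A B C D) = fromRows A C := by
  ext (_ | _) _ <;> rfl

section Semiring

variable [Semiring R]

lemma toCols₁_mul [Fintype m] (A : Matrix l m R) (B : Matrix m (n ⊕ p) R) :
    toCols₁ (A * B) = A * toCols₁ B :=
  rfl

lemma toBlocks₁₁_transpose_mul_self [Fintype l] [Fintype m] (X : Matrix (l ⊕ m) (n ⊕ p) R) :
    toBlocks₁₁ (Xᵀ * X) = (toCols₁ X)ᵀ * toCols₁ X :=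
  rfl

end Semiring

lemma toBlocks₁₁_transpose_mul_self_sub_eq_zero [Ring R] [Fintype l] [Fintype m]
    {X Y : Matrix (l ⊕ m) (n ⊕ p) R} (h : toCols₁ X = toCols₁ Y) :
    toBlocks₁₁ (Xᵀ * X - Yᵀ * Y) = 0 := by
  have hsub : toBlocks₁₁ (Xᵀ * X - Yᵀ * Y) = toBlocks₁₁ (Xᵀ * X) - toBlocks₁₁ (Yᵀ * Y) := rfl
  rw [hsub, toBlocks₁₁_transpose_mul_self, toBlocks₁₁_transpose_mul_self, h, sub_self]

/-- The closed-loop map `T_K` of the controller with Youla parameter `Q`. -/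
def youlaTransfer [Ring R] [Fintype m] [Fintype n] (F : Matrix k m R) (G : Matrix k l R)
    (L : Matrix n l R) (Q : Matrix m n R) : Matrix (k ⊕ m) (l ⊕ n) R :=
  fromBlocks (F * Q * L + G) (F * Q) (Q * L) Q

lemma youlaTransfer_mul_fromRows_one_neg [Ring R] [Fintype m] [Fintype n] [Fintype l]
    [DecidableEq l] (F : Matrix k m R) (G : Matrix k l R) (L : Matrix n l R)
    (Q : Matrix m n R) :
    youlaTransfer F G L Q * fromRows (1 : Matrix l l R) (-L) = fromRows G (0 : Matrix m l R) := by
  rw [youlaTransfer, fromBlocks_mul_fromRows]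
  congr 1 <;> simp only [Matrix.mul_one, Matrix.mul_neg] <;> abel

lemma toCols₁_mul_youlaTransfer_mul [Ring R] [Fintype k] [Fintype l] [Fintype m] [Fintype n]
    [DecidableEq l] (θ : Matrix p (k ⊕ m) R) (F : Matrix k m R) (G : Matrix k l R)
    (L : Matrix n l R) (Q : Matrix m n R) {ψ : Matrix (l ⊕ n) (q ⊕ r) R} {V : Matrix l q R}
    (hψ : toCols₁ ψ = fromRows (1 : Matrix l l R) (-L) * V) :
    toCols₁ (θ * youlaTransfer F G L Q * ψ) = θ * fromRows G (0 : Matrix m l R) * V := by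
  rw [toCols₁_mul, hψ, Matrix.mul_assoc θ, ← Matrix.mul_assoc _ _ V,
    youlaTransfer_mul_fromRows_one_neg, Matrix.mul_assoc]

lemma not_posDef_of_toBlocks₁₁_eq_zero [Ring R] [PartialOrder R] [StarRing R] [Nontrivial R]
    [Nonempty m] {D : Matrix (m ⊕ n) (m ⊕ n) R} (h : toBlocks₁₁ D = 0) : ¬ D.PosDef := by
  intro hD
  obtain ⟨i⟩ := ‹Nonempty m›
  have hii : D (Sum.inl i) (Sum.inl i) = 0 := congrFun (congrFun h i) i
  exact (hD.diag_pos (i := Sum.inl i)).ne' hii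

lemma not_posDef_conjTranspose_mul_self_sub_of_mulVec_eq [CommRing R] [PartialOrder R]
    [StarRing R] [Fintype m] [Fintype n] {A B : Matrix m n R} {x : n → R} (hx : x ≠ 0)
    (h : A *ᵥ x = B *ᵥ x) : ¬ (Aᴴ * A - Bᴴ * B).PosDef := by
  intro hAB
  have hquad : ∀ C : Matrix m n R, star x ⬝ᵥ ((Cᴴ * C) *ᵥ x) = star (C *ᵥ x) ⬝ᵥ (C *ᵥ x) := by
    intro C
    rw [← mulVec_mulVec, dotProduct_mulVec, vecMul_conjTranspose, star_star]
  have hzero : star x ⬝ᵥ ((Aᴴ * A - Bᴴ * B) *ᵥ x) = 0 := by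
    rw [sub_mulVec, dotProduct_sub, hquad, hquad, h, sub_self]
  exact (hAB.dotProduct_mulVec_pos hx).ne' hzero

end Matrix

theorem stmt_15_general {n : ℕ} (hn : 0 < n) (F G L : Matrix (Fin n) (Fin n) ℝ)
    (Uih Vih : Matrix (Fin n) (Fin n) ℝ)
    (Q Q' : Matrix (Fin n) (Fin n) ℝ)
    (θ ψ TK TK' D : Matrix (Fin n ⊕ Fin n) (Fin n ⊕ Fin n) ℝ)
    (hψ : ψ = (Matrix.fromBlocks 1 Lᵀ (-L) 1) * (Matrix.fromBlocks Vih 0 0 Uih))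
    (hTK : TK = Matrix.fromBlocks (F * Q * L + G) (F * Q) (Q * L) Q)
    (hTK' : TK' = Matrix.fromBlocks (F * Q' * L + G) (F * Q') (Q' * L) Q')
    (hD : D = (θ * TK' * ψ)ᵀ * (θ * TK' * ψ) - (θ * TK * ψ)ᵀ * (θ * TK * ψ)) :
    Matrix.toBlocks₁₁ D = 0 ∧ ¬ D.PosDef ∧ ¬ (TK'ᵀ * TK' - TKᵀ * TK).PosDef := by
  have i : Fin n := ⟨0, hn⟩
  change TK = youlaTransfer F G L Q at hTK
  change TK' = youlaTransfer F G L Q' at hTK'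
  have hψ₁ : toCols₁ ψ = fromRows (1 : Matrix (Fin n) (Fin n) ℝ) (-L) * Vih := by
    simp [hψ, toCols₁_mul, toCols₁_fromBlocks, fromBlocks_mul_fromRows]
  have hD₁₁ : toBlocks₁₁ D = 0 := by
    rw [hD]
    apply toBlocks₁₁_transpose_mul_self_sub_eq_zero
    rw [hTK, hTK', toCols₁_mul_youlaTransfer_mul _ _ _ _ _ hψ₁,
      toCols₁_mul_youlaTransfer_mul _ _ _ _ _ hψ₁]
  have : Nonempty (Fin n) := ⟨i⟩
  refine ⟨hD₁₁, not_posDef_of_toBlocks₁₁_eq_zero hD₁₁, ?_⟩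
  have hx : fromRows (1 : Matrix (Fin n) (Fin n) ℝ) (-L) *ᵥ Pi.single i 1 ≠ 0 := by
    intro h
    simpa using congrFun h (Sum.inl i)
  rw [← conjTranspose_eq_transpose_of_trivial TK, ← conjTranspose_eq_transpose_of_trivial TK']
  refine not_posDef_conjTranspose_mul_self_sub_of_mulVec_eq hx ?_
  rw [hTK, hTK', mulVec_mulVec, mulVec_mulVec, youlaTransfer_mul_fromRows_one_neg,
    youlaTransfer_mul_fromRows_one_neg]

/-- No noncausal linear controller strictly dominates all others: for distinct Youla
parameters `Q ≠ Q'`, the difference of cost operators, conjugated by the orthogonal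
matrices `θ` and `ψ`, has zero (1,1) block and hence is not positive definite;
consequently `T_{K'}ᵀ T_{K'} - T_Kᵀ T_K` is not positive definite. -/
theorem stmt_15 {n : ℕ} (hn : 0 < n) (F G L : Matrix (Fin n) (Fin n) ℝ)
    (hF : ∀ i j : Fin n, i ≤ j → F i j = 0) (hG : ∀ i j : Fin n, i ≤ j → G i j = 0)
    (hL : ∀ i j : Fin n, i ≤ j → L i j = 0)
    (Sih Tih Uih Vih : Matrix (Fin n) (Fin n) ℝ)
    (hSih : Sih.PosDef) (hTih : Tih.PosDef) (hUih : Uih.PosDef) (hVih : Vih.PosDef)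
    (hSih2 : Sih * Sih = (1 + F * Fᵀ)⁻¹) (hTih2 : Tih * Tih = (1 + Fᵀ * F)⁻¹)
    (hUih2 : Uih * Uih = (1 + L * Lᵀ)⁻¹) (hVih2 : Vih * Vih = (1 + Lᵀ * L)⁻¹)
    (Q Q' : Matrix (Fin n) (Fin n) ℝ) (hQQ' : Q ≠ Q')
    (θ ψ TK TK' D : Matrix (Fin n ⊕ Fin n) (Fin n ⊕ Fin n) ℝ)
    (hθ : θ = (Matrix.fromBlocks Sih 0 0 Tih) * (Matrix.fromBlocks 1 (-F) Fᵀ 1))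
    (hψ : ψ = (Matrix.fromBlocks 1 Lᵀ (-L) 1) * (Matrix.fromBlocks Vih 0 0 Uih))
    (hTK : TK = Matrix.fromBlocks (F * Q * L + G) (F * Q) (Q * L) Q)
    (hTK' : TK' = Matrix.fromBlocks (F * Q' * L + G) (F * Q') (Q' * L) Q')
    (hD : D = (θ * TK' * ψ)ᵀ * (θ * TK' * ψ) - (θ * TK * ψ)ᵀ * (θ * TK * ψ)) :
    Matrix.toBlocks₁₁ D = 0 ∧ ¬ D.PosDef ∧ ¬ (TK'ᵀ * TK' - TKᵀ * TK).PosDef :=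
  stmt_15_general hn F G L Uih Vih Q Q' θ ψ TK TK' D hψ hTK hTK' hD
end

section
/- For the transfer operator T_K = [[FQL+G, FQ],[QL, Q]] and the orthogonal matrices θ, ψ defined from F and L, the identity θ T_K ψ = [[S^{-1/2}G V^{-1/2}, S^{-1/2}G L^T U^{-1/2}], [T^{-1/2}F^T G V^{-1/2}, T^{1/2} Q U^{1/2} + T^{-1/2}F^T G L^T U^{-1/2}]] holds; in particular, Q appears only in the (2,2) block. -/
/-!
Multiplying out the blocks is a noncommutative polynomial identity as soon as the
(2,2) entry `T^{1/2} Q U^{1/2}` is written as `T^{-1/2} (1 + FᵀF) Q (1 + LLᵀ) U^{-1/2}`.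
That rewriting is justified by `T^{-1/2} = (T^{1/2})⁻¹` (and likewise for `U`), which is
uniqueness of positive square roots.
-/

open Matrix

namespace Matrix

open scoped ComplexOrder MatrixOrder

variable {𝕜 ι : Type*} [RCLike 𝕜] [Fintype ι] [DecidableEq ι]

lemma PosSemidef.eq_inv_of_mul_self_eq_inv {A B : Matrix ι ι 𝕜} (hA : A.PosSemidef)
    (hB : B.PosDef) (h : A * A = (B * B)⁻¹) : A = B⁻¹ :=
  (CFC.mul_self_eq_mul_self_iff A B⁻¹ hA.nonneg hB.inv.posSemidef.nonneg).1 <| by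
    rw [h, Matrix.mul_inv_rev]

lemma PosSemidef.mul_mul_self_eq_of_mul_self_eq_inv {A B : Matrix ι ι 𝕜} (hA : A.PosSemidef)
    (hB : B.PosDef) (h : A * A = (B * B)⁻¹) : A * (B * B) = B := by
  rw [hA.eq_inv_of_mul_self_eq_inv hB h, ← mul_assoc,
    nonsing_inv_mul _ ((isUnit_iff_isUnit_det _).1 hB.isUnit), one_mul]

lemma PosSemidef.mul_self_mul_eq_of_mul_self_eq_inv {A B : Matrix ι ι 𝕜} (hA : A.PosSemidef)
    (hB : B.PosDef) (h : A * A = (B * B)⁻¹) : (B * B) * A = B := by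
  rw [hA.eq_inv_of_mul_self_eq_inv hB h, mul_assoc,
    mul_nonsing_inv _ ((isUnit_iff_isUnit_det _).1 hB.isUnit), mul_one]

lemma fromBlocks_rotation_mul_transfer_mul_rotation {α m n p q : Type*} [Ring α]
    [Fintype m] [Fintype n] [Fintype p] [Fintype q]
    [DecidableEq m] [DecidableEq n] [DecidableEq p] [DecidableEq q]
    (S : Matrix m m α) (T : Matrix n n α) (V : Matrix p p α) (U : Matrix q q α)
    (F : Matrix m n α) (F' : Matrix n m α) (G : Matrix m p α) (L : Matrix q p α)
    (L' : Matrix p q α) (Q : Matrix n q α) :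
    (fromBlocks S 0 0 T * fromBlocks 1 (-F) F' 1) *
        fromBlocks (F * Q * L + G) (F * Q) (Q * L) Q *
        (fromBlocks 1 L' (-L) 1 * fromBlocks V 0 0 U) =
      fromBlocks (S * G * V) (S * G * L' * U)
        (T * F' * G * V) (T * (1 + F' * F) * Q * ((1 + L * L') * U) + T * F' * G * L' * U) := by
  simp only [fromBlocks_multiply, fromBlocks_inj, Matrix.mul_add, Matrix.add_mul,
    Matrix.mul_assoc, Matrix.mul_neg, Matrix.neg_mul, Matrix.mul_one, Matrix.one_mul, Matrix.mul_zero, Matrix.zero_mul, add_zero, zero_add, neg_zero,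
    neg_add_rev, add_neg_cancel, add_neg_cancel_comm, add_add_neg_add_cancel, true_and]
  abel

end Matrix

theorem stmt_16_general {n : ℕ} (F G L Q : Matrix (Fin n) (Fin n) ℝ)
    (Sih Tih Uih Vih Th Uh : Matrix (Fin n) (Fin n) ℝ)
    (hTih : Tih.PosDef) (hUih : Uih.PosDef)
    (hTh : Th.PosDef) (hUh : Uh.PosDef)
    (hTih2 : Tih * Tih = (1 + Fᵀ * F)⁻¹)
    (hUih2 : Uih * Uih = (1 + L * Lᵀ)⁻¹)
    (hTh2 : Th * Th = 1 + Fᵀ * F) (hUh2 : Uh * Uh = 1 + L * Lᵀ) :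
    ((Matrix.fromBlocks Sih 0 0 Tih) * (Matrix.fromBlocks 1 (-F) Fᵀ 1)) *
        (Matrix.fromBlocks (F * Q * L + G) (F * Q) (Q * L) Q) *
        ((Matrix.fromBlocks 1 Lᵀ (-L) 1) * (Matrix.fromBlocks Vih 0 0 Uih)) =
      Matrix.fromBlocks (Sih * G * Vih) (Sih * G * Lᵀ * Uih)
        (Tih * Fᵀ * G * Vih) (Th * Q * Uh + Tih * Fᵀ * G * Lᵀ * Uih) := by
  have hT : Tih * (1 + Fᵀ * F) = Th := by
    rw [← hTh2]
    exact hTih.posSemidef.mul_mul_self_eq_of_mul_self_eq_inv hTh (by rw [hTih2, hTh2])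
  have hU : (1 + L * Lᵀ) * Uih = Uh := by
    rw [← hUh2]
    exact hUih.posSemidef.mul_self_mul_eq_of_mul_self_eq_inv hUh (by rw [hUih2, hUh2])
  rw [← hT, ← hU]
  exact fromBlocks_rotation_mul_transfer_mul_rotation _ _ _ _ _ _ _ _ _ _

/-- The identity `θ T_K ψ = [[S^{-1/2}G V^{-1/2}, S^{-1/2}G Lᵀ U^{-1/2}],
[T^{-1/2}Fᵀ G V^{-1/2}, T^{1/2} Q U^{1/2} + T^{-1/2}Fᵀ G Lᵀ U^{-1/2}]]`, where
`T_K = [[FQL+G, FQ],[QL, Q]]`; in particular `Q` appears only in the (2,2) block. -/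
theorem stmt_16 {n : ℕ} (F G L Q : Matrix (Fin n) (Fin n) ℝ)
    (Sih Tih Uih Vih Th Uh : Matrix (Fin n) (Fin n) ℝ)
    (hSih : Sih.PosDef) (hTih : Tih.PosDef) (hUih : Uih.PosDef) (hVih : Vih.PosDef)
    (hTh : Th.PosDef) (hUh : Uh.PosDef)
    (hSih2 : Sih * Sih = (1 + F * Fᵀ)⁻¹) (hTih2 : Tih * Tih = (1 + Fᵀ * F)⁻¹)
    (hUih2 : Uih * Uih = (1 + L * Lᵀ)⁻¹) (hVih2 : Vih * Vih = (1 + Lᵀ * L)⁻¹)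
    (hTh2 : Th * Th = 1 + Fᵀ * F) (hUh2 : Uh * Uh = 1 + L * Lᵀ) :
    ((Matrix.fromBlocks Sih 0 0 Tih) * (Matrix.fromBlocks 1 (-F) Fᵀ 1)) *
        (Matrix.fromBlocks (F * Q * L + G) (F * Q) (Q * L) Q) *
        ((Matrix.fromBlocks 1 Lᵀ (-L) 1) * (Matrix.fromBlocks Vih 0 0 Uih)) =
      Matrix.fromBlocks (Sih * G * Vih) (Sih * G * Lᵀ * Uih)
        (Tih * Fᵀ * G * Vih) (Th * Q * Uh + Tih * Fᵀ * G * Lᵀ * Uih) :=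
  stmt_16_general F G L Q Sih Tih Uih Vih Th Uh hTih hUih hTh hUh hTih2 hUih2 hTh2 hUh2
end

section
/- The choice Q* = -T^{-1} F^T G L^T U^{-1} minimizes the Frobenius norm of the transfer operator T_K = [[FQL+G, FQ],[QL, Q]] over all matrices Q, i.e., the H_2-optimal noncausal controller zeroes the (2,2) block of θ T_K ψ. -/
open Matrix

attribute [local instance] Matrix.frobeniusNormedAddCommGroup

namespace Stmt17Aux

variable {n : ℕ}

/-- sum of squared entries, as a trace -/
noncomputable def sqF (A : Matrix (Fin n) (Fin n) ℝ) : ℝ := trace (Aᵀ * A)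

lemma sqF_eq_sum (A : Matrix (Fin n) (Fin n) ℝ) :
    sqF A = ∑ i, ∑ j, (A i j) ^ 2 := by
  simp only [sqF, trace, diag, mul_apply, transpose_apply]
  rw [Finset.sum_comm]
  simp [pow_two]

lemma sqF_nonneg (A : Matrix (Fin n) (Fin n) ℝ) : 0 ≤ sqF A := by
  rw [sqF_eq_sum]
  positivity

lemma sqF_pos_of_ne_zero {A : Matrix (Fin n) (Fin n) ℝ} (hA : A ≠ 0) : 0 < sqF A := by
  rcases lt_or_eq_of_le (sqF_nonneg A) with h | h
  · exact h
  exfalso; apply hA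
  rw [sqF_eq_sum] at h
  ext i j
  have h1 : ∀ i ∈ Finset.univ, (0:ℝ) ≤ ∑ j, (A i j)^2 := fun i _ => by positivity
  have h2 := (Finset.sum_eq_zero_iff_of_nonneg h1).mp h.symm i (Finset.mem_univ i)
  have h3 : ∀ j ∈ Finset.univ, (0:ℝ) ≤ (A i j)^2 := fun j _ => by positivity
  have := (Finset.sum_eq_zero_iff_of_nonneg h3).mp h2 j (Finset.mem_univ j)
  simpa using pow_eq_zero_iff (n := 2) (by norm_num) |>.mp this

/-- inner product -/
noncomputable def ip (A B : Matrix (Fin n) (Fin n) ℝ) : ℝ := trace (Aᵀ * B)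

lemma sqF_add (A B : Matrix (Fin n) (Fin n) ℝ) :
    sqF (A + B) = sqF A + 2 * ip A B + sqF B := by
  have h : trace (Bᵀ * A) = ip A B := by
    unfold ip
    rw [← trace_transpose (Aᵀ * B), transpose_mul, transpose_transpose]
  simp only [sqF, ip, transpose_add, add_mul, mul_add, trace_add] at *
  linarith

lemma norm_fromBlocks (A B C D : Matrix (Fin n) (Fin n) ℝ) :
    ‖fromBlocks A B C D‖ = Real.sqrt (sqF A + sqF B + sqF C + sqF D) := by
  rw [frobenius_norm_def]
  rw [Real.sqrt_eq_rpow]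
  congr 1
  simp only [sqF_eq_sum]
  rw [Fintype.sum_sum_type]
  simp only [Fintype.sum_sum_type, fromBlocks_apply₁₁, fromBlocks_apply₁₂,
    fromBlocks_apply₂₁, fromBlocks_apply₂₂]
  simp [Finset.sum_add_distrib, Real.norm_eq_abs, sq_abs, Real.rpow_two]
  ring

end Stmt17Aux

open Stmt17Aux

/-- `Q* = -T⁻¹ Fᵀ G Lᵀ U⁻¹` (with `T = I + FᵀF`, `U = I + LLᵀ`) uniquely minimizes the
Frobenius norm of the transfer operator `T_K = [[FQL+G, FQ],[QL, Q]]` over all `Q`. -/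
theorem stmt_17 {n : ℕ} (F G L : Matrix (Fin n) (Fin n) ℝ)
    (Qstar : Matrix (Fin n) (Fin n) ℝ)
    (hQstar : Qstar = -((1 + Fᵀ * F)⁻¹ * Fᵀ * G * Lᵀ * (1 + L * Lᵀ)⁻¹)) :
    (∀ Q : Matrix (Fin n) (Fin n) ℝ,
        ‖Matrix.fromBlocks (F * Qstar * L + G) (F * Qstar) (Qstar * L) Qstar‖ ≤
          ‖Matrix.fromBlocks (F * Q * L + G) (F * Q) (Q * L) Q‖) ∧
      (∀ Q : Matrix (Fin n) (Fin n) ℝ, Q ≠ Qstar →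
        ‖Matrix.fromBlocks (F * Qstar * L + G) (F * Qstar) (Qstar * L) Qstar‖ <
          ‖Matrix.fromBlocks (F * Q * L + G) (F * Q) (Q * L) Q‖) := by
  set T : Matrix (Fin n) (Fin n) ℝ := 1 + Fᵀ * F with hT
  set U : Matrix (Fin n) (Fin n) ℝ := 1 + L * Lᵀ with hU
  -- invertibility
  have hTpd : T.PosDef := by
    apply Matrix.PosDef.one.add_posSemidef
    simpa using Matrix.posSemidef_conjTranspose_mul_self F
  have hUpd : U.PosDef := by
    apply Matrix.PosDef.one.add_posSemidef
    simpa using Matrix.posSemidef_self_mul_conjTranspose L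
  have hTinv : T * T⁻¹ = 1 := Matrix.mul_nonsing_inv T (Matrix.isUnit_iff_isUnit_det T |>.mp hTpd.isUnit)
  have hUinv : U⁻¹ * U = 1 := Matrix.nonsing_inv_mul U (Matrix.isUnit_iff_isUnit_det U |>.mp hUpd.isUnit)
  -- Key identity: T * Qstar * U = -(Fᵀ * G * Lᵀ)
  have hkey : T * Qstar * U + Fᵀ * G * Lᵀ = 0 := by
    rw [hQstar]
    have : T * -(T⁻¹ * Fᵀ * G * Lᵀ * U⁻¹) * U
        = -((T * T⁻¹) * (Fᵀ * G * Lᵀ) * (U⁻¹ * U)) := by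
      simp only [Matrix.mul_neg, Matrix.neg_mul]
      congr 1
      simp only [Matrix.mul_assoc]
    rw [this, hTinv, hUinv, Matrix.one_mul, Matrix.mul_one]
    simp
  -- cross term vanishes
  have hcross : ∀ X : Matrix (Fin n) (Fin n) ℝ,
      ip (F * Qstar * L + G) (F * X * L) + ip (F * Qstar) (F * X)
        + ip (Qstar * L) (X * L) + ip Qstar X = 0 := by
    intro X
    have e1 : ip (F * Qstar * L + G) (F * X * L)
        = trace ((L * Lᵀ * Qstarᵀ * Fᵀ * F + L * Gᵀ * F) * X) := by
      simp only [ip, transpose_add, transpose_mul, transpose_transpose, Matrix.add_mul,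
        trace_add, ← Matrix.mul_assoc]
      rw [trace_mul_comm _ L, trace_mul_comm _ L]
      simp only [← Matrix.mul_assoc]
    have e2 : ip (F * Qstar) (F * X) = trace ((Qstarᵀ * Fᵀ * F) * X) := by
      simp only [ip, transpose_mul, transpose_transpose, ← Matrix.mul_assoc]
    have e3 : ip (Qstar * L) (X * L) = trace ((L * Lᵀ * Qstarᵀ) * X) := by
      simp only [ip, transpose_mul, transpose_transpose, ← Matrix.mul_assoc]
      rw [trace_mul_comm _ L]
      simp only [← Matrix.mul_assoc]
    have e4 : ip Qstar X = trace (Qstarᵀ * X) := rfl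
    rw [e1, e2, e3, e4, ← trace_add, ← trace_add, ← trace_add]
    have : (L * Lᵀ * Qstarᵀ * Fᵀ * F + L * Gᵀ * F) * X + (Qstarᵀ * Fᵀ * F) * X
        + (L * Lᵀ * Qstarᵀ) * X + Qstarᵀ * X
        = (T * Qstar * U + Fᵀ * G * Lᵀ)ᵀ * X := by
      rw [hT, hU]
      simp only [transpose_add, transpose_mul, transpose_transpose, transpose_one]
      noncomm_ring
    rw [this, hkey]
    simp
  -- the quadratic expansion
  have hmain : ∀ Q : Matrix (Fin n) (Fin n) ℝ,
      sqF (F * Q * L + G) + sqF (F * Q) + sqF (Q * L) + sqF Q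
        = (sqF (F * Qstar * L + G) + sqF (F * Qstar) + sqF (Qstar * L) + sqF Qstar)
          + (sqF (F * (Q - Qstar) * L) + sqF (F * (Q - Qstar)) + sqF ((Q - Qstar) * L)
            + sqF (Q - Qstar)) := by
    intro Q
    set X := Q - Qstar with hX
    have hQ : Q = Qstar + X := by rw [hX]; abel
    have d1 : F * Q * L + G = (F * Qstar * L + G) + F * X * L := by
      rw [hQ]; noncomm_ring
    have d2 : F * Q = F * Qstar + F * X := by rw [hQ]; noncomm_ring
    have d3 : Q * L = Qstar * L + X * L := by rw [hQ]; noncomm_ring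
    have d4 : Q = Qstar + X := hQ
    rw [d1, d2, d3]
    nth_rewrite 1 [d4]
    simp only [sqF_add]
    have := hcross X
    linarith
  -- conclude
  have hnorm : ∀ Q : Matrix (Fin n) (Fin n) ℝ,
      ‖Matrix.fromBlocks (F * Q * L + G) (F * Q) (Q * L) Q‖
        = Real.sqrt (sqF (F * Q * L + G) + sqF (F * Q) + sqF (Q * L) + sqF Q) :=
    fun Q => norm_fromBlocks _ _ _ _
  constructor
  · intro Q
    rw [hnorm, hnorm]
    apply Real.sqrt_le_sqrt
    rw [hmain Q]
    have := sqF_nonneg (F * (Q - Qstar) * L)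
    have := sqF_nonneg (F * (Q - Qstar))
    have := sqF_nonneg ((Q - Qstar) * L)
    have := sqF_nonneg (Q - Qstar)
    linarith
  · intro Q hQ
    rw [hnorm, hnorm]
    apply Real.sqrt_lt_sqrt
    · have := sqF_nonneg (F * Qstar * L + G)
      have := sqF_nonneg (F * Qstar)
      have := sqF_nonneg (Qstar * L)
      have := sqF_nonneg Qstar
      linarith
    · rw [hmain Q]
      have h0 : Q - Qstar ≠ 0 := sub_ne_zero.mpr hQ
      have := sqF_pos_of_ne_zero h0
      have := sqF_nonneg (F * (Q - Qstar) * L)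
      have := sqF_nonneg (F * (Q - Qstar))
      have := sqF_nonneg ((Q - Qstar) * L)
      linarith
end
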